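/- arXiv:2303.04425 — 6 statements merged into one kernel-verified Lean document; each statement's English description precedes it below -/
import Mathlib

section
/- The function ρ(f, g, r) = (max over t ∈ [0,S] of |f(t) − g(t)|) / r on C[0,S] is a generalized parametric metric with binary operation max, and (C[0,S], ρ, max) is a complete generalized parametric metric space. -/
lemma sup_dist_eq (S : ℝ) (hS : 0 < S) (f g : C(Set.Icc (0 : ℝ) S, ℝ)) :
    (⨆ t : Set.Icc (0 : ℝ) S, |f t - g t|) = dist f g := by
  have : Nonempty (Set.Icc (0 : ℝ) S) := ⟨⟨0, by simp [hS.le]⟩⟩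
  rw [← BoundedContinuousFunction.dist_mkOfCompact, BoundedContinuousFunction.dist_eq_iSup]
  simp [Real.dist_eq]

/-- ρ(f,g,r) = (sup_{t∈[0,S]} |f t − g t|)/r makes C[0,S] a complete generalized
parametric metric space with o = max. -/
theorem sup_dist_div_is_complete_gpm (S : ℝ) (hS : 0 < S) :
    let ρ : C(Set.Icc (0 : ℝ) S, ℝ) → C(Set.Icc (0 : ℝ) S, ℝ) → ℝ → ℝ :=
      fun f g r => (⨆ t : Set.Icc (0 : ℝ) S, |f t - g t|) / r
    (∀ f g, (∀ r : ℝ, 0 < r → ρ f g r = 0) ↔ f = g) ∧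
    (∀ f g r, ρ f g r = ρ g f r) ∧
    (∀ f g h, ∀ r₁ r₂ : ℝ, 0 < r₁ → 0 < r₂ →
      ρ f g (r₁ + r₂) ≤ max (ρ f h r₁) (ρ g h r₂)) ∧
    (∀ x : ℕ → C(Set.Icc (0 : ℝ) S, ℝ),
      (∀ r : ℝ, 0 < r →
        Filter.Tendsto (fun q : ℕ × ℕ => ρ (x q.1) (x q.2) r) Filter.atTop (nhds 0)) →
      ∃ a, ∀ r : ℝ, 0 < r →
        Filter.Tendsto (fun n => ρ (x n) a r) Filter.atTop (nhds 0)) := by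
  intro ρ
  have hρ : ∀ f g r, ρ f g r = dist f g / r := fun f g r => by
    simp only [ρ, sup_dist_eq S hS]
  refine ⟨?_, ?_, ?_, ?_⟩
  · intro f g
    constructor
    · intro h
      have := h 1 one_pos
      rw [hρ] at this
      simpa [dist_eq_zero] using this
    · intro h r hr; subst h; simp [hρ]
  · intro f g r; simp [hρ, dist_comm]
  · intro f g h r₁ r₂ h₁ h₂
    simp only [hρ]
    set M := max (dist f h / r₁) (dist g h / r₂) with hM
    have hM₁ : dist f h ≤ M * r₁ := by
      rw [← div_le_iff₀ h₁]; exact le_max_left _ _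
    have hM₂ : dist g h ≤ M * r₂ := by
      rw [← div_le_iff₀ h₂]; exact le_max_right _ _
    rw [div_le_iff₀ (by linarith)]
    calc dist f g ≤ dist f h + dist h g := dist_triangle _ _ _
      _ = dist f h + dist g h := by rw [dist_comm h g]
      _ ≤ M * r₁ + M * r₂ := add_le_add hM₁ hM₂
      _ = M * (r₁ + r₂) := by ring
  · intro x hx
    have hc : CauchySeq x := by
      rw [cauchySeq_iff_tendsto_dist_atTop_0]
      have := hx 1 one_pos
      simpa [hρ] using this
    obtain ⟨a, ha⟩ := cauchySeq_tendsto_of_complete hc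
    refine ⟨a, fun r hr => ?_⟩
    have : Filter.Tendsto (fun n => dist (x n) a) Filter.atTop (nhds 0) :=
      tendsto_iff_dist_tendsto_zero.mp ha
    simpa [hρ] using this.div_const r
end

section
/- Existence and uniqueness for a second-order IVP: consider y'' + w²y = G(x, y(x)) on [0,S] with y(0) = l₁, y'(0) = l₂, where w ≠ 0, G : [0,S] × ℝ → ℝ is continuous, and there exists a non-decreasing, right upper semi-continuous φ : [0,∞) → [0,∞) with φ(s) < s for all s > 0 such that (1/r)|G(x, u) − G(x, v)| ≤ w²·φ(|u − v|/r) for all r > 0, x ∈ [0,S], u, v ∈ ℝ. Then the IVP has a unique solution in C[0,S]. -/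
/-!
Taking `r = |u - v|` in the hypothesis on `G` shows that `G x` is Lipschitz with constant
`w² φ(1)`, so the equation is the first-order system `(y, y')' = (y', G(t, y) - w² y)` with a
right-hand side that is Lipschitz in the state, uniformly in time. Such a field grows at most
linearly, which gives Picard–Lindelöf solutions on steps of a length independent of the initial
value; gluing finitely many of them covers `[0, S]`. Uniqueness is Grönwall's estimate.
-/

open Set
open scoped NNReal

section IntegralCurve

variable {E : Type*} [NormedAddCommGroup E] [NormedSpace ℝ E] {v g : ℝ → E → E} {K : ℝ≥0}

theorem IsIntegralCurveOn.hasDerivWithinAt_of_eqOn {γ η : ℝ → E} {s : Set ℝ}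
    (hγ : IsIntegralCurveOn γ v s) (hs : IsClosed s) (hη : EqOn η γ s) (t : ℝ) :
    HasDerivWithinAt η (v t (η t)) s t := by
  by_cases ht : t ∈ s
  · rw [hη ht]
    exact (hγ t ht).congr hη (hη ht)
  · exact HasFDerivWithinAt.of_notMem_closure (by rwa [hs.closure_eq])

theorem IsIntegralCurveOn.piecewise_Icc {γ γ' : ℝ → E} {a b c : ℝ}
    (hγ : IsIntegralCurveOn γ v (Icc a b)) (hγ' : IsIntegralCurveOn γ' v (Icc b c))
    (hab : a ≤ b) (hbc : b ≤ c) (h : γ b = γ' b) :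
    IsIntegralCurveOn (fun t => if t ≤ b then γ t else γ' t) v (Icc a c) := by
  intro t _
  rw [← Icc_union_Icc_eq_Icc hab hbc]
  refine (hγ.hasDerivWithinAt_of_eqOn isClosed_Icc (fun s hs => ?_) t).union
    (hγ'.hasDerivWithinAt_of_eqOn isClosed_Icc (fun s hs => ?_) t)
  · simp [hs.2]
  · rcases hs.1.eq_or_lt with rfl | hlt
    · simp [h]
    · simp [not_le.mpr hlt]

theorem IsIntegralCurveOn.eqOn_Icc {γ γ' : ℝ → E} {a b : ℝ}
    (hlip : ∀ t ∈ Icc a b, LipschitzWith K (v t))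
    (hγ : IsIntegralCurveOn γ v (Icc a b)) (hγ' : IsIntegralCurveOn γ' v (Icc a b))
    (h : γ a = γ' a) : EqOn γ γ' (Icc a b) :=
  ODE_solution_unique_of_mem_Icc_right (s := fun _ => univ)
    (fun t ht => (hlip t (Ico_subset_Icc_self ht)).lipschitzOnWith) hγ.continuousOn
    (fun t ht => (hγ t (Ico_subset_Icc_self ht)).mono_of_mem_nhdsWithin
      (Icc_mem_nhdsGE_of_mem ht))
    (fun _ _ => mem_univ _) hγ'.continuousOn
    (fun t ht => (hγ' t (Ico_subset_Icc_self ht)).mono_of_mem_nhdsWithin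
      (Icc_mem_nhdsGE_of_mem ht))
    (fun _ _ => mem_univ _) h

theorem isIntegralCurveOn_prodMk_iff {y y' : ℝ → E} {s : Set ℝ} :
    IsIntegralCurveOn (fun t => (y t, y' t)) (fun t p => (p.2, g t p.1)) s ↔
      (∀ t ∈ s, HasDerivWithinAt y (y' t) s t) ∧
        ∀ t ∈ s, HasDerivWithinAt y' (g t (y t)) s t :=
  ⟨fun h => ⟨fun t ht =>
      (ContinuousLinearMap.fst ℝ E E).hasFDerivAt.comp_hasDerivWithinAt t (h t ht),
    fun t ht => (ContinuousLinearMap.snd ℝ E E).hasFDerivAt.comp_hasDerivWithinAt t (h t ht)⟩,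
    fun h t ht => (h.1 t ht).prodMk (h.2 t ht)⟩

variable [CompleteSpace E]

theorem exists_isIntegralCurveOn_Icc_of_sub_mul_le {A t₀ t₁ : ℝ} (x₀ : E)
    (hcont : ∀ x, ContinuousOn (v · x) (Icc t₀ t₁))
    (hlip : ∀ t ∈ Icc t₀ t₁, LipschitzWith K (v t))
    (hA : ∀ t ∈ Icc t₀ t₁, ‖v t 0‖ ≤ A) (h₀₁ : t₀ ≤ t₁)
    (hlen : (t₁ - t₀) * (A + 2 * K + 1) ≤ 1) :
    ∃ γ, γ t₀ = x₀ ∧ IsIntegralCurveOn γ v (Icc t₀ t₁) := by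
  have hA₀ : 0 ≤ A := (norm_nonneg _).trans (hA t₀ ⟨le_rfl, h₀₁⟩)
  set M := ‖x₀‖
  have hbound : ∀ t ∈ Icc t₀ t₁, ∀ x ∈ Metric.closedBall x₀ (M + 1),
      ‖v t x‖ ≤ A + K * (2 * M + 1) := by
    intro t ht x hx
    have hx' : ‖x‖ ≤ 2 * M + 1 := by
      have := norm_le_norm_add_norm_sub' x x₀
      rw [mem_closedBall_iff_norm] at hx
      linarith
    calc ‖v t x‖ ≤ ‖v t 0‖ + ‖v t x - v t 0‖ := norm_le_insert' _ _
      _ ≤ A + K * ‖x - 0‖ := add_le_add (hA t ht) ((hlip t ht).norm_sub_le x 0)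
      _ ≤ A + K * (2 * M + 1) := by rw [sub_zero]; gcongr
  have hpl : IsPicardLindelof v (⟨t₀, le_rfl, h₀₁⟩ : Icc t₀ t₁) x₀
      ⟨M + 1, by positivity⟩ 0 ⟨A + K * (2 * M + 1), by positivity⟩ K :=
    { lipschitzOnWith := fun t ht => (hlip t ht).lipschitzOnWith
      continuousOn := fun x _ => hcont x
      norm_le := hbound
      mul_max_le := by
        change (A + K * (2 * M + 1)) * max (t₁ - t₀) (t₀ - t₀) ≤ M + 1 - 0
        rw [sub_self, max_eq_left (sub_nonneg.2 h₀₁), sub_zero]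
        have hK : (0 : ℝ) ≤ K := K.2
        have hM : 0 ≤ M := norm_nonneg _
        have h₀₁' : 0 ≤ t₁ - t₀ := sub_nonneg.2 h₀₁
        nlinarith [mul_nonneg (mul_nonneg hA₀ hM) h₀₁'] }
  exact hpl.exists_eq_forall_mem_Icc_hasDerivWithinAt₀

theorem exists_isIntegralCurveOn_Icc_of_lipschitzWith {a b : ℝ} (x₀ : E)
    (hcont : ∀ x, ContinuousOn (v · x) (Icc a b))
    (hlip : ∀ t ∈ Icc a b, LipschitzWith K (v t)) :
    ∃ γ, γ a = x₀ ∧ IsIntegralCurveOn γ v (Icc a b) := by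
  rcases lt_or_ge b a with hba | hab
  · exact ⟨fun _ => x₀, rfl, by simp [IsIntegralCurveOn, Icc_eq_empty_of_lt hba]⟩
  obtain ⟨A, hA⟩ := isCompact_Icc.exists_bound_of_continuousOn (hcont 0)
  -- Linear growth makes the Picard–Lindelöf step `1 / D` independent of the initial value.
  set D : ℝ := A + 2 * K + 1
  have hD : 0 < D := by
    have := (norm_nonneg _).trans (hA a ⟨le_rfl, hab⟩)
    positivity
  set c : ℕ → ℝ := fun n => min b (a + n / D)
  have hc_mem (n : ℕ) : c n ∈ Icc a b :=
    ⟨le_min hab (le_add_of_nonneg_right (by positivity)), min_le_left _ _⟩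
  have hc_succ (n : ℕ) : c n ≤ c (n + 1) ∧ (c (n + 1) - c n) * D ≤ 1 := by
    have hstep : a + ↑(n + 1) / D = a + n / D + 1 / D := by push_cast; ring
    refine ⟨min_le_min_left b (by rw [hstep]; linarith [one_div_pos.2 hD]), ?_⟩
    rw [← le_div_iff₀ hD, sub_le_iff_le_add', ← min_add_add_right]
    exact min_le_min (le_add_of_nonneg_right (one_div_pos.2 hD).le) hstep.le
  have hlocal {t₀ t₁ : ℝ} (y : E) (hsub : Icc t₀ t₁ ⊆ Icc a b) (h₀₁ : t₀ ≤ t₁)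
      (hlen : (t₁ - t₀) * D ≤ 1) : ∃ γ, γ t₀ = y ∧ IsIntegralCurveOn γ v (Icc t₀ t₁) :=
    exists_isIntegralCurveOn_Icc_of_sub_mul_le y (fun x => (hcont x).mono hsub)
      (fun t ht => hlip t (hsub ht)) (fun t ht => hA t (hsub ht)) h₀₁ hlen
  have key (n : ℕ) : ∃ γ, γ a = x₀ ∧ IsIntegralCurveOn γ v (Icc a (c n)) := by
    induction n with
    | zero =>
      have hc0 : c 0 = a := by simp [c, hab]
      exact hlocal x₀ (Icc_subset_Icc le_rfl (hc_mem 0).2) (hc_mem 0).1 (by simp [hc0])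
    | succ n ih =>
      obtain ⟨γ, hγa, hγ⟩ := ih
      obtain ⟨γ', hγ'c, hγ'⟩ := hlocal (γ (c n))
        (Icc_subset_Icc (hc_mem n).1 (hc_mem _).2) (hc_succ n).1 (hc_succ n).2
      exact ⟨_, by simp [(hc_mem n).1, hγa],
        hγ.piecewise_Icc hγ' (hc_mem n).1 (hc_succ n).1 hγ'c.symm⟩
  obtain ⟨n, hn⟩ := exists_nat_ge ((b - a) * D)
  have hcn : c n = b :=
    min_eq_left (by rw [← sub_le_iff_le_add', le_div_iff₀ hD]; exact hn)
  simpa [hcn] using key n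

end IntegralCurve


theorem LipschitzWith.prodMk_snd_comp_fst {α β : Type*} [PseudoEMetricSpace α]
    [PseudoEMetricSpace β] {K : ℝ≥0} {f : α → β} (hf : LipschitzWith K f) :
    LipschitzWith (max 1 K) fun p : α × β => (p.2, f p.1) :=
  LipschitzWith.prod_snd.prodMk <| by
    have := hf.comp (LipschitzWith.prod_fst (α := α) (β := β))
    rwa [mul_one] at this

theorem lipschitzWith_of_forall_pos_inv_mul_le {f φ : ℝ → ℝ} {c : ℝ}
    (h : ∀ r : ℝ, 0 < r → ∀ u v : ℝ, (1 / r) * |f u - f v| ≤ c * φ (|u - v| / r)) :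
    LipschitzWith (c * φ 1).toNNReal f := by
  refine LipschitzWith.of_dist_le_mul fun u v => ?_
  rcases eq_or_ne u v with rfl | huv
  · simp
  have hr : 0 < |u - v| := abs_pos.2 (sub_ne_zero.2 huv)
  have := h _ hr u v
  rw [div_self hr.ne', one_div, inv_mul_le_iff₀ hr] at this
  rw [Real.dist_eq, Real.dist_eq, Real.coe_toNNReal']
  nlinarith [le_max_left (c * φ 1) 0]

theorem second_order_ivp_unique_solution_general
    (S w l₁ l₂ : ℝ)
    (G : ℝ → ℝ → ℝ)
    (hG : ContinuousOn (fun p : ℝ × ℝ => G p.1 p.2) (Icc 0 S ×ˢ univ))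
    (φ : ℝ → ℝ)
    (hGlip : ∀ r : ℝ, 0 < r → ∀ x ∈ Icc (0 : ℝ) S, ∀ u v : ℝ,
      (1 / r) * |G x u - G x v| ≤ w ^ 2 * φ (|u - v| / r)) :
    ∃ y y' : ℝ → ℝ,
      (ContinuousOn y (Icc 0 S) ∧
        (∀ t ∈ Icc (0 : ℝ) S, HasDerivWithinAt y (y' t) (Icc 0 S) t) ∧
        (∀ t ∈ Icc (0 : ℝ) S,
          HasDerivWithinAt y' (G t (y t) - w ^ 2 * y t) (Icc 0 S) t) ∧
        y 0 = l₁ ∧ y' 0 = l₂) ∧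
      ∀ z z' : ℝ → ℝ,
        (ContinuousOn z (Icc 0 S) ∧
          (∀ t ∈ Icc (0 : ℝ) S, HasDerivWithinAt z (z' t) (Icc 0 S) t) ∧
          (∀ t ∈ Icc (0 : ℝ) S,
            HasDerivWithinAt z' (G t (z t) - w ^ 2 * z t) (Icc 0 S) t) ∧
          z 0 = l₁ ∧ z' 0 = l₂) →
        Set.EqOn z y (Icc 0 S) := by
  set g : ℝ → ℝ → ℝ := fun t y => G t y - w ^ 2 * y
  have hcont (p : ℝ × ℝ) : ContinuousOn (fun t => (p.2, g t p.1)) (Icc 0 S) :=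
    continuousOn_const.prodMk <| (hG.comp (continuousOn_id.prodMk continuousOn_const)
      fun t ht => ⟨ht, mem_univ _⟩).sub continuousOn_const
  have hlip (t : ℝ) (ht : t ∈ Icc 0 S) :
      LipschitzWith (max 1 ((w ^ 2 * φ 1).toNNReal + ‖w ^ 2‖₊))
        fun p : ℝ × ℝ => (p.2, g t p.1) :=
    ((lipschitzWith_of_forall_pos_inv_mul_le fun r hr => hGlip r hr t ht).sub
      (lipschitzWith_smul (w ^ 2))).prodMk_snd_comp_fst
  obtain ⟨γ, hγ0, hγ⟩ := exists_isIntegralCurveOn_Icc_of_lipschitzWith (l₁, l₂) hcont hlip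
  obtain ⟨hy, hy'⟩ := isIntegralCurveOn_prodMk_iff.1 hγ
  refine ⟨fun t => (γ t).1, fun t => (γ t).2,
    ⟨hγ.continuousOn.fst, hy, hy', by simp [hγ0], by simp [hγ0]⟩, ?_⟩
  rintro z z' ⟨-, hz, hz', hz0, hz'0⟩
  have hzγ := (isIntegralCurveOn_prodMk_iff.2 ⟨hz, hz'⟩).eqOn_Icc hlip hγ
    (by simp [hγ0, hz0, hz'0])
  exact fun t ht => congrArg Prod.fst (hzγ ht)

/-- Existence and uniqueness of a solution in C[0,S] to the second-order IVP
y'' + w²y = G(x, y(x)), y(0) = l₁, y'(0) = l₂, under a Boyd–Wong type condition. -/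
theorem second_order_ivp_unique_solution
    (S w l₁ l₂ : ℝ) (hS : 0 < S) (hw : w ≠ 0)
    (G : ℝ → ℝ → ℝ)
    (hG : ContinuousOn (fun p : ℝ × ℝ => G p.1 p.2) (Icc 0 S ×ˢ univ))
    (φ : ℝ → ℝ)
    (hφmono : ∀ s t : ℝ, 0 ≤ s → s ≤ t → φ s ≤ φ t)
    (hφnn : ∀ s : ℝ, 0 ≤ s → 0 ≤ φ s)
    (hφlt : ∀ s : ℝ, 0 < s → φ s < s)
    (hφusc : ∀ s : ℝ, 0 ≤ s → ∀ u : ℕ → ℝ, (∀ n, s ≤ u n) →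
      Filter.Tendsto u Filter.atTop (nhds s) →
      Filter.limsup (fun n => φ (u n)) Filter.atTop ≤ φ s)
    (hGlip : ∀ r : ℝ, 0 < r → ∀ x ∈ Icc (0 : ℝ) S, ∀ u v : ℝ,
      (1 / r) * |G x u - G x v| ≤ w ^ 2 * φ (|u - v| / r)) :
    ∃ y y' : ℝ → ℝ,
      (ContinuousOn y (Icc 0 S) ∧
        (∀ t ∈ Icc (0 : ℝ) S, HasDerivWithinAt y (y' t) (Icc 0 S) t) ∧
        (∀ t ∈ Icc (0 : ℝ) S,
          HasDerivWithinAt y' (G t (y t) - w ^ 2 * y t) (Icc 0 S) t) ∧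
        y 0 = l₁ ∧ y' 0 = l₂) ∧
      ∀ z z' : ℝ → ℝ,
        (ContinuousOn z (Icc 0 S) ∧
          (∀ t ∈ Icc (0 : ℝ) S, HasDerivWithinAt z (z' t) (Icc 0 S) t) ∧
          (∀ t ∈ Icc (0 : ℝ) S,
            HasDerivWithinAt z' (G t (z t) - w ^ 2 * z t) (Icc 0 S) t) ∧
          z 0 = l₁ ∧ z' 0 = l₂) →
        Set.EqOn z y (Icc 0 S) :=
  second_order_ivp_unique_solution_general S w l₁ l₂ G hG φ hGlip
end

section
/- In the ordered Banach setting, iterates of comparable points converge to the same limit: if F is monotone with ρ(Fx, Fy, r) ≤ κρ(x, y, r) for comparable x, y (0 ≤ κ < 1), and Fⁿ(α) → β, then for any γ comparable with α (γ ⪯ α or γ ⪰ α), Fⁿ(γ) → β. -/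
/-!
The iterates of comparable points stay comparable, so the contraction applies at every step and
`ρ (Fⁿ γ) (Fⁿ α) r ≤ κⁿ ρ γ α r → 0`. Splitting `r = r/2 + r/2` in the triangle inequality through
`Fⁿ α`, continuity of `o` at `(0, 0)` with `o 0 0 = 0` then transfers the convergence `Fⁿ α → β`
to `Fⁿ γ`.
-/

open Filter Topology Relation

theorem Relation.SymmGen.map_of_monotone_or_antitone {X : Type*} [Preorder X] {F : X → X}
    (hF : Monotone F ∨ Antitone F) {x y : X} (h : SymmGen (· ≤ ·) x y) :
    SymmGen (· ≤ ·) (F x) (F y) := by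
  rcases hF with hF | hF <;> rcases h with h | h
  · exact .inl (hF h)
  · exact .inr (hF h)
  · exact .inr (hF h)
  · exact .inl (hF h)

theorem Relation.SymmGen.iterate_of_monotone_or_antitone {X : Type*} [Preorder X] {F : X → X}
    (hF : Monotone F ∨ Antitone F) {x y : X} (h : SymmGen (· ≤ ·) x y) (n : ℕ) :
    SymmGen (· ≤ ·) (F^[n] x) (F^[n] y) := by
  induction n with
  | zero => exact h
  | succ n ih =>
    rw [Function.iterate_succ_apply', Function.iterate_succ_apply']
    exact SymmGen.map_of_monotone_or_antitone hF ih

section ParametricMetric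

variable {X : Type*} (ρ : X → X → ℝ → ℝ)

theorem tendsto_param_dist_add_of_tendsto_via (o : ℝ → ℝ → ℝ) (ho0 : o 0 0 = 0)
    (hocont : ContinuousAt (fun q : ℝ × ℝ => o q.1 q.2) (0, 0))
    (hρnonneg : ∀ x y r, 0 < r → 0 ≤ ρ x y r)
    (hρ3 : ∀ x y z r₁ r₂, 0 < r₁ → 0 < r₂ → ρ x y (r₁ + r₂) ≤ o (ρ x z r₁) (ρ y z r₂))
    {ι : Type*} {l : Filter ι} {u v w : ι → X} {r₁ r₂ : ℝ} (hr₁ : 0 < r₁) (hr₂ : 0 < r₂)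
    (hu : Tendsto (fun i => ρ (u i) (w i) r₁) l (𝓝 0))
    (hv : Tendsto (fun i => ρ (v i) (w i) r₂) l (𝓝 0)) :
    Tendsto (fun i => ρ (u i) (v i) (r₁ + r₂)) l (𝓝 0) := by
  have ho : Tendsto (fun i => o (ρ (u i) (w i) r₁) (ρ (v i) (w i) r₂)) l (𝓝 0) := by
    simpa only [Function.comp_def, ho0] using hocont.tendsto.comp (hu.prodMk_nhds hv)
  exact squeeze_zero (fun i => hρnonneg _ _ _ (add_pos hr₁ hr₂))
    (fun i => hρ3 _ _ _ _ _ hr₁ hr₂) ho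

variable [Preorder X] {ρ} (hρ2 : ∀ x y r, ρ x y r = ρ y x r) {F : X → X} {κ : ℝ}
  (hF : ∀ x y : X, y ≤ x → ∀ r : ℝ, 0 < r → ρ (F x) (F y) r ≤ κ * ρ x y r)
include hρ2 hF

theorem param_dist_map_le_of_symmGen {x y : X} (h : SymmGen (· ≤ ·) x y) {r : ℝ} (hr : 0 < r) :
    ρ (F x) (F y) r ≤ κ * ρ x y r := by
  rcases h with h | h
  · rw [hρ2, hρ2 x]
    exact hF _ _ h r hr
  · exact hF _ _ h r hr

theorem param_dist_iterate_le_of_symmGen (hmono : Monotone F ∨ Antitone F) (hκ0 : 0 ≤ κ)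
    {x y : X} (h : SymmGen (· ≤ ·) x y) {r : ℝ} (hr : 0 < r) (n : ℕ) :
    ρ (F^[n] x) (F^[n] y) r ≤ κ ^ n * ρ x y r := by
  induction n with
  | zero => simp
  | succ n ih =>
    rw [Function.iterate_succ_apply', Function.iterate_succ_apply']
    calc ρ (F (F^[n] x)) (F (F^[n] y)) r
        ≤ κ * ρ (F^[n] x) (F^[n] y) r :=
          param_dist_map_le_of_symmGen hρ2 hF (SymmGen.iterate_of_monotone_or_antitone hmono h n) hr
      _ ≤ κ * (κ ^ n * ρ x y r) := mul_le_mul_of_nonneg_left ih hκ0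
      _ = κ ^ (n + 1) * ρ x y r := by ring

theorem tendsto_param_dist_iterate_of_symmGen (hρnonneg : ∀ x y r, 0 < r → 0 ≤ ρ x y r)
    (hmono : Monotone F ∨ Antitone F) (hκ0 : 0 ≤ κ) (hκ1 : κ < 1)
    {x y : X} (h : SymmGen (· ≤ ·) x y) {r : ℝ} (hr : 0 < r) :
    Tendsto (fun n => ρ (F^[n] x) (F^[n] y) r) atTop (𝓝 0) := by
  have hgeom : Tendsto (fun n => κ ^ n * ρ x y r) atTop (𝓝 0) := by
    simpa using (tendsto_pow_atTop_nhds_zero_of_lt_one hκ0 hκ1).mul_const (ρ x y r)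
  exact squeeze_zero (fun n => hρnonneg _ _ _ hr)
    (param_dist_iterate_le_of_symmGen hρ2 hF hmono hκ0 h hr) hgeom

end ParametricMetric

theorem gpm_iterates_of_comparable_converge_general {X : Type*} [PartialOrder X]
    (ρ : X → X → ℝ → ℝ) (o : ℝ → ℝ → ℝ)
    (ho0 : ∀ a : ℝ, 0 ≤ a → o a 0 = a)
    (hocont : Continuous fun q : ℝ × ℝ => o q.1 q.2)
    (hρnonneg : ∀ x y r, 0 < r → 0 ≤ ρ x y r)
    (hρ2 : ∀ x y r, ρ x y r = ρ y x r)
    (hρ3 : ∀ x y z r₁ r₂, 0 < r₁ → 0 < r₂ → ρ x y (r₁ + r₂) ≤ o (ρ x z r₁) (ρ y z r₂))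
    (F : X → X) (hmono : Monotone F ∨ Antitone F)
    (κ : ℝ) (hκ0 : 0 ≤ κ) (hκ1 : κ < 1)
    (hF : ∀ x y : X, y ≤ x → ∀ r : ℝ, 0 < r → ρ (F x) (F y) r ≤ κ * ρ x y r)
    (α β : X)
    (hβ : ∀ r : ℝ, 0 < r →
      Filter.Tendsto (fun n => ρ (F^[n] α) β r) Filter.atTop (nhds 0))
    (γ : X) (hγ : γ ≤ α ∨ α ≤ γ) :
    ∀ r : ℝ, 0 < r →
      Filter.Tendsto (fun n => ρ (F^[n] γ) β r) Filter.atTop (nhds 0) := by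
  intro r hr
  have hr2 : 0 < r / 2 := half_pos hr
  have hγα : Tendsto (fun n => ρ (F^[n] γ) (F^[n] α) (r / 2)) atTop (𝓝 0) :=
    tendsto_param_dist_iterate_of_symmGen hρ2 hF hρnonneg hmono hκ0 hκ1 hγ hr2
  have hβα : Tendsto (fun n => ρ β (F^[n] α) (r / 2)) atTop (𝓝 0) := by
    simpa only [hρ2 β] using hβ (r / 2) hr2
  simpa only [add_halves] using
    tendsto_param_dist_add_of_tendsto_via ρ o (ho0 0 le_rfl) hocont.continuousAt hρnonneg hρ3
      hr2 hr2 hγα hβα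

/-- Iterates of points comparable with α converge to the same limit β. -/
theorem gpm_iterates_of_comparable_converge {X : Type*} [PartialOrder X]
    (ρ : X → X → ℝ → ℝ) (o : ℝ → ℝ → ℝ)
    (ho0 : ∀ a : ℝ, 0 ≤ a → o a 0 = a)
    (homono : ∀ a b c : ℝ, 0 ≤ a → a ≤ b → 0 ≤ c → o a c ≤ o b c)
    (hocomm : ∀ a b : ℝ, o a b = o b a)
    (hoassoc : ∀ a b c : ℝ, o a (o b c) = o (o a b) c)
    (hocont : Continuous fun q : ℝ × ℝ => o q.1 q.2)
    (hρnonneg : ∀ x y r, 0 < r → 0 ≤ ρ x y r)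
    (hρ1 : ∀ x y, (∀ r, 0 < r → ρ x y r = 0) ↔ x = y)
    (hρ2 : ∀ x y r, ρ x y r = ρ y x r)
    (hρ3 : ∀ x y z r₁ r₂, 0 < r₁ → 0 < r₂ → ρ x y (r₁ + r₂) ≤ o (ρ x z r₁) (ρ y z r₂))
    (F : X → X) (hmono : Monotone F ∨ Antitone F)
    (κ : ℝ) (hκ0 : 0 ≤ κ) (hκ1 : κ < 1)
    (hF : ∀ x y : X, y ≤ x → ∀ r : ℝ, 0 < r → ρ (F x) (F y) r ≤ κ * ρ x y r)
    (α β : X)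
    (hβ : ∀ r : ℝ, 0 < r →
      Filter.Tendsto (fun n => ρ (F^[n] α) β r) Filter.atTop (nhds 0))
    (γ : X) (hγ : γ ≤ α ∨ α ≤ γ) :
    ∀ r : ℝ, 0 < r →
      Filter.Tendsto (fun n => ρ (F^[n] γ) β r) Filter.atTop (nhds 0) :=
  gpm_iterates_of_comparable_converge_general ρ o ho0 hocont hρnonneg hρ2 hρ3 F hmono κ hκ0 hκ1 hF α
    β hβ γ hγ
end

section
/- Existence and uniqueness for a first-order periodic BVP: consider u'(t) = f(t, u(t)), t ∈ [0,S], u(0) = u(S), with f continuous, and suppose there exist a > b > 0 such that for all r₁ ≤ r₂ in ℝ: 0 ≤ (f(t, r₂) + a·r₂) − (f(t, r₁) + a·r₁) ≤ b·(r₂ − r₁). If the problem has a lower solution (or an upper solution), then it has a unique solution in C[0,S]. -/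
/-!
Writing the equation as `u' + a u = g(t, u)` with `g(t, r) = f(t, r) + a r`, the periodic
solutions are exactly the fixed points of `u ↦ ∫₀ˢ G(·, z) g(z, u z) dz` on `C([0, S])`.
Since `G ≥ 0` and `∫₀ˢ G(t, z) dz = 1 / a`, while `g(t, ·)` is `b`-Lipschitz, this operator is a
`b / a`-contraction for the sup distance, and Banach's fixed point theorem gives existence and
uniqueness at once.
-/

open Set Real Function intervalIntegral

namespace PeriodicBVP

theorem abs_sub_le_of_increment_mem_Icc {φ : ℝ → ℝ} {b : ℝ}
    (hφ : ∀ r₁ r₂, r₁ ≤ r₂ → 0 ≤ φ r₂ - φ r₁ ∧ φ r₂ - φ r₁ ≤ b * (r₂ - r₁)) (x y : ℝ) :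
    |φ x - φ y| ≤ b * |x - y| := by
  rcases le_total x y with hxy | hyx
  · obtain ⟨hnonneg, hle⟩ := hφ x y hxy
    rwa [abs_sub_comm, abs_of_nonneg hnonneg, abs_sub_comm, abs_of_nonneg (sub_nonneg.2 hxy)]
  · obtain ⟨hnonneg, hle⟩ := hφ y x hyx
    rwa [abs_of_nonneg hnonneg, abs_of_nonneg (sub_nonneg.2 hyx)]

variable {S a M : ℝ} {h k : ℝ → ℝ}

theorem integral_exp_mul (ha : a ≠ 0) (l r : ℝ) :
    ∫ z in l..r, exp (a * z) = (exp (a * r) - exp (a * l)) / a := by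
  rw [integral_comp_mul_left (fun z => exp z) ha, integral_exp, smul_eq_mul]
  field_simp

theorem abs_integral_exp_mul_le (ha : a ≠ 0) {l r : ℝ} (hlr : l ≤ r)
    (hM : ∀ z ∈ Icc l r, |h z| ≤ M) :
    |∫ z in l..r, exp (a * z) * h z| ≤ M * ((exp (a * r) - exp (a * l)) / a) := by
  have hexp : Continuous fun z => exp (a * z) := by fun_prop
  calc |∫ z in l..r, exp (a * z) * h z|
      ≤ ∫ z in l..r, M * exp (a * z) := by
        rw [← norm_eq_abs]
        refine norm_integral_le_of_norm_le hlr (Filter.Eventually.of_forall fun z hz => ?_)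
          ((continuous_const.mul hexp).intervalIntegrable _ _)
        rw [norm_mul, norm_of_nonneg (exp_pos _).le, mul_comm]
        exact mul_le_mul_of_nonneg_right (hM z (Ioc_subset_Icc_self hz)) (exp_pos _).le
    _ = M * ((exp (a * r) - exp (a * l)) / a) := by
        rw [integral_const_mul, integral_exp_mul ha]

variable (S a) in
/-- `∫₀ˢ G(t, z) h(z) dz` for the Green's function `G`: the `S`-periodic solution of
`u' + a u = h` when `a S ≠ 0` (otherwise `(e^{aS} - 1)⁻¹` is the junk value `0`). -/
noncomputable def linearPeriodicSolution (h : ℝ → ℝ) (t : ℝ) : ℝ :=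
  exp (-(a * t)) * ((∫ z in 0..t, exp (a * z) * h z) +
    (exp (a * S) - 1)⁻¹ * ∫ z in 0..S, exp (a * z) * h z)

theorem hasDerivAt_linearPeriodicSolution (hh : Continuous h) (t : ℝ) :
    HasDerivAt (linearPeriodicSolution S a h) (h t - a * linearPeriodicSolution S a h t) t := by
  have hint : Continuous fun z => exp (a * z) * h z := by fun_prop
  have hA : HasDerivAt (fun t => ∫ z in 0..t, exp (a * z) * h z) (exp (a * t) * h t) t :=
    integral_hasDerivAt_right (hint.intervalIntegrable _ _)
      hint.aestronglyMeasurable.stronglyMeasurableAtFilter hint.continuousAt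
  have hexp : HasDerivAt (fun t => exp (-(a * t))) (exp (-(a * t)) * -(a * 1)) t :=
    ((hasDerivAt_id t).const_mul a).neg.exp
  refine (hexp.mul (hA.add_const _)).congr_deriv ?_
  have hinv : exp (-(a * t)) * exp (a * t) = 1 := by rw [← exp_add, neg_add_cancel, exp_zero]
  unfold linearPeriodicSolution
  linear_combination h t * hinv

theorem continuous_linearPeriodicSolution (hh : Continuous h) :
    Continuous (linearPeriodicSolution S a h) :=
  continuous_iff_continuousAt.2 fun t => (hasDerivAt_linearPeriodicSolution hh t).continuousAt

theorem linearPeriodicSolution_zero_eq (haS : a * S ≠ 0) :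
    linearPeriodicSolution S a h 0 = linearPeriodicSolution S a h S := by
  have hE : exp (a * S) - 1 ≠ 0 := sub_ne_zero.2 (by simpa using haS)
  simp only [linearPeriodicSolution, mul_zero, neg_zero, exp_zero, integral_same, zero_add,
    one_mul, exp_neg]
  field_simp
  ring

theorem linearPeriodicSolution_sub (hh : Continuous h) (hk : Continuous k) (t : ℝ) :
    linearPeriodicSolution S a (h - k) t =
      linearPeriodicSolution S a h t - linearPeriodicSolution S a k t := by
  have hint : ∀ h : ℝ → ℝ, Continuous h → ∀ l r : ℝ,
      IntervalIntegrable (fun z => exp (a * z) * h z) MeasureTheory.volume l r :=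
    fun h hh l r => (by fun_prop : Continuous fun z => exp (a * z) * h z).intervalIntegrable l r
  simp only [linearPeriodicSolution, Pi.sub_apply, mul_sub,
    integral_sub (hint h hh _ _) (hint k hk _ _)]
  ring

theorem abs_linearPeriodicSolution_le (ha : 0 < a) (hS : 0 < S) (hh : Continuous h)
    (hM : ∀ z ∈ Icc 0 S, |h z| ≤ M) {t : ℝ} (ht : t ∈ Icc 0 S) :
    |linearPeriodicSolution S a h t| ≤ M / a := by
  obtain ⟨ht0, htS⟩ := ht
  set E := exp (a * S)
  set x := exp (a * t)
  have hE : 1 < E := one_lt_exp_iff.2 (by positivity)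
  have hx : 0 < x := exp_pos _
  have hint : Continuous fun z => exp (a * z) * h z := by fun_prop
  set I₁ := ∫ z in 0..t, exp (a * z) * h z
  set I₂ := ∫ z in t..S, exp (a * z) * h z
  have hI₁ : |I₁| ≤ M * ((x - 1) / a) := by
    simpa using abs_integral_exp_mul_le ha.ne' ht0 fun z hz => hM z ⟨hz.1, hz.2.trans htS⟩
  have hI₂ : |I₂| ≤ M * ((E - x) / a) :=
    abs_integral_exp_mul_le ha.ne' htS fun z hz => hM z ⟨ht0.trans hz.1, hz.2⟩
  have hsplit : ∫ z in 0..S, exp (a * z) * h z = I₁ + I₂ :=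
    (integral_add_adjacent_intervals (hint.intervalIntegrable _ _)
      (hint.intervalIntegrable _ _)).symm
  have hrepr : linearPeriodicSolution S a h t = (E * I₁ + I₂) / (x * (E - 1)) := by
    change exp (-(a * t)) * (I₁ + (E - 1)⁻¹ * ∫ z in 0..S, exp (a * z) * h z) = _
    rw [hsplit, exp_neg]
    have hE' : E - 1 ≠ 0 := by linarith
    field_simp
    ring
  have hden : 0 < x * (E - 1) := mul_pos hx (by linarith)
  rw [hrepr, abs_div, abs_of_pos hden, div_le_div_iff₀ hden ha]
  calc |E * I₁ + I₂| * a ≤ (E * (M * ((x - 1) / a)) + M * ((E - x) / a)) * a := by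
        gcongr
        refine (abs_add_le _ _).trans (add_le_add ?_ hI₂)
        rw [abs_mul, abs_of_pos (by linarith)]
        gcongr
    _ = M * (x * (E - 1)) := by field_simp; ring

theorem eqOn_zero_of_periodic_of_hasDerivWithinAt (ha : a ≠ 0) (hS : 0 < S) {w : ℝ → ℝ}
    (hw : ∀ t ∈ Icc 0 S, HasDerivWithinAt w (-(a * w t)) (Icc 0 S) t) (hper : w 0 = w S) :
    EqOn w 0 (Icc 0 S) := by
  set m : ℝ → ℝ := fun t => exp (a * t) * w t
  have hm : ∀ t ∈ Icc 0 S, HasDerivWithinAt m 0 (Icc 0 S) t := by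
    intro t ht
    have := (((hasDerivAt_id t).const_mul a).exp.hasDerivWithinAt).mul (hw t ht)
    exact this.congr_deriv (by ring)
  have hconst : ∀ t ∈ Icc 0 S, m t = m 0 := constant_of_derivWithin_zero
    (fun t ht => (hm t ht).differentiableWithinAt)
    (fun t ht => (hm t (Ico_subset_Icc_self ht)).derivWithin
      (uniqueDiffOn_Icc hS t (Ico_subset_Icc_self ht)))
  have hwS : w S = 0 := by
    have hmS := hconst S (right_mem_Icc.2 hS.le)
    simp only [m, mul_zero, exp_zero, one_mul, hper] at hmS
    have hE : exp (a * S) - 1 ≠ 0 := sub_ne_zero.2 (by simpa using mul_ne_zero ha hS.ne')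
    exact (mul_eq_zero.1 (by linear_combination hmS)).resolve_left hE
  intro t ht
  simpa [m, hper, hwS, exp_ne_zero] using hconst t ht

theorem eqOn_linearPeriodicSolution (ha : a ≠ 0) (hS : 0 < S) (hh : Continuous h) {v : ℝ → ℝ}
    (hv : ∀ t ∈ Icc 0 S, HasDerivWithinAt v (h t - a * v t) (Icc 0 S) t) (hper : v 0 = v S) :
    EqOn v (linearPeriodicSolution S a h) (Icc 0 S) := by
  intro t ht
  refine sub_eq_zero.1 (eqOn_zero_of_periodic_of_hasDerivWithinAt
    (w := v - linearPeriodicSolution S a h) ha hS (fun t ht => ?_) ?_ ht)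
  · exact ((hv t ht).sub (hasDerivAt_linearPeriodicSolution hh t).hasDerivWithinAt).congr_deriv
      (by simp only [Pi.sub_apply]; ring)
  · simp [hper, linearPeriodicSolution_zero_eq (mul_ne_zero ha hS.ne')]

variable (S) in
def IsPeriodicSolution (F : ℝ → ℝ → ℝ) (u : ℝ → ℝ) : Prop :=
  (∀ t ∈ Icc 0 S, HasDerivWithinAt u (F t (u t)) (Icc 0 S) t) ∧ u 0 = u S

section GreenOperator

variable {b : ℝ} {g : ℝ → ℝ → ℝ}

theorem continuous_apply_IccExtend (hS : 0 ≤ S) (hg : Continuous fun p : ℝ × ℝ => g p.1 p.2)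
    (u : C(Icc 0 S, ℝ)) : Continuous fun z => g z (IccExtend hS u z) :=
  hg.comp (continuous_id.prodMk u.continuous.Icc_extend')

variable (a g) in
/-- The integral operator `u ↦ ∫₀ˢ G(·, z) g(z, u z) dz` of the equivalent integral equation. -/
noncomputable def greenOperator (hS : 0 ≤ S) (hg : Continuous fun p : ℝ × ℝ => g p.1 p.2)
    (u : C(Icc 0 S, ℝ)) : C(Icc 0 S, ℝ) :=
  ⟨fun t => linearPeriodicSolution S a (fun z => g z (IccExtend hS u z)) t,
    (continuous_linearPeriodicSolution (continuous_apply_IccExtend hS hg u)).comp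
      continuous_subtype_val⟩

theorem lipschitzWith_greenOperator (ha : 0 < a) (hS : 0 < S)
    (hg : Continuous fun p : ℝ × ℝ => g p.1 p.2) (hb : 0 ≤ b)
    (hLip : ∀ t ∈ Icc 0 S, ∀ x y, |g t x - g t y| ≤ b * |x - y|) :
    LipschitzWith (b / a).toNNReal (greenOperator a g hS.le hg) := by
  refine LipschitzWith.of_dist_le_mul fun u v => ?_
  rw [Real.coe_toNNReal _ (by positivity), ContinuousMap.dist_le (by positivity)]
  intro t
  rw [Real.dist_eq]
  have hbound : ∀ z ∈ Icc 0 S,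
      |g z (IccExtend hS.le u z) - g z (IccExtend hS.le v z)| ≤ b * dist u v := fun z hz =>
    (hLip z hz _ _).trans (mul_le_mul_of_nonneg_left (by
      rw [← Real.dist_eq]; exact ContinuousMap.dist_apply_le_dist _) hb)
  calc |linearPeriodicSolution S a (fun z => g z (IccExtend hS.le u z)) t -
        linearPeriodicSolution S a (fun z => g z (IccExtend hS.le v z)) t|
      = |linearPeriodicSolution S a
          ((fun z => g z (IccExtend hS.le u z)) - fun z => g z (IccExtend hS.le v z)) t| := by
        rw [linearPeriodicSolution_sub (continuous_apply_IccExtend hS.le hg u)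
          (continuous_apply_IccExtend hS.le hg v)]
    _ ≤ b * dist u v / a := abs_linearPeriodicSolution_le ha hS
        ((continuous_apply_IccExtend hS.le hg u).sub (continuous_apply_IccExtend hS.le hg v))
        hbound t.2
    _ = b / a * dist u v := by ring

theorem isPeriodicSolution_IccExtend_of_isFixedPt (ha : a ≠ 0) (hS : 0 < S)
    (hg : Continuous fun p : ℝ × ℝ => g p.1 p.2) {u : C(Icc 0 S, ℝ)}
    (hu : IsFixedPt (greenOperator a g hS.le hg) u) :
    IsPeriodicSolution S (fun t r => g t r - a * r) (IccExtend hS.le u) := by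
  set U := linearPeriodicSolution S a (fun z => g z (IccExtend hS.le u z))
  have hU : EqOn (IccExtend hS.le u) U (Icc 0 S) := fun t ht => by
    rw [IccExtend_of_mem _ _ ht, ← hu]
    rfl
  refine ⟨fun t ht => ?_, ?_⟩
  · have : HasDerivAt U (g t (IccExtend hS.le u t) - a * U t) t :=
      hasDerivAt_linearPeriodicSolution (continuous_apply_IccExtend hS.le hg u) t
    rw [← hU ht] at this
    exact this.hasDerivWithinAt.congr hU (hU ht)
  · rw [hU (left_mem_Icc.2 hS.le), hU (right_mem_Icc.2 hS.le)]
    exact linearPeriodicSolution_zero_eq (mul_ne_zero ha hS.ne')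

theorem exists_isFixedPt_of_isPeriodicSolution (ha : a ≠ 0) (hS : 0 < S)
    (hg : Continuous fun p : ℝ × ℝ => g p.1 p.2) {v : ℝ → ℝ}
    (hv : IsPeriodicSolution S (fun t r => g t r - a * r) v) :
    ∃ u, IsFixedPt (greenOperator a g hS.le hg) u ∧ EqOn v (IccExtend hS.le u) (Icc 0 S) := by
  have hvc : ContinuousOn v (Icc 0 S) := fun t ht => (hv.1 t ht).continuousWithinAt
  set u : C(Icc 0 S, ℝ) := ⟨fun t => v t, hvc.domRestrict⟩
  have hu : EqOn v (IccExtend hS.le u) (Icc 0 S) := fun t ht => by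
    rw [IccExtend_of_mem _ _ ht]
    rfl
  refine ⟨u, ContinuousMap.ext fun t => ?_, hu⟩
  refine (eqOn_linearPeriodicSolution ha hS (continuous_apply_IccExtend hS.le hg u)
    (fun s hs => ?_) hv.2 t.2).symm
  rw [← hu hs]
  exact hv.1 s hs

end GreenOperator

end PeriodicBVP

open PeriodicBVP

theorem periodic_bvp_unique_solution_general
    (S a b : ℝ) (hS : 0 < S) (hb : 0 < b) (hba : b < a)
    (f : ℝ → ℝ → ℝ) (hf : Continuous fun p : ℝ × ℝ => f p.1 p.2)
    (hcond : ∀ t ∈ Icc (0 : ℝ) S, ∀ r₁ r₂ : ℝ, r₁ ≤ r₂ →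
      0 ≤ (f t r₂ + a * r₂) - (f t r₁ + a * r₁) ∧
        (f t r₂ + a * r₂) - (f t r₁ + a * r₁) ≤ b * (r₂ - r₁)) :
    ∃ u : ℝ → ℝ,
      ((∀ t ∈ Icc (0 : ℝ) S, HasDerivWithinAt u (f t (u t)) (Icc 0 S) t) ∧
        u 0 = u S) ∧
      ∀ v : ℝ → ℝ,
        (∀ t ∈ Icc (0 : ℝ) S, HasDerivWithinAt v (f t (v t)) (Icc 0 S) t) →
        v 0 = v S → Set.EqOn v u (Icc 0 S) := by
  have ha : 0 < a := hb.trans hba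
  set g : ℝ → ℝ → ℝ := fun t r => f t r + a * r
  have hg : Continuous fun p : ℝ × ℝ => g p.1 p.2 := by fun_prop
  have hfg : (fun t r => g t r - a * r) = f := by simp [g]
  have hT : ContractingWith (b / a).toNNReal (greenOperator a g hS.le hg) :=
    ⟨by simpa [div_lt_one ha] using hba,
      lipschitzWith_greenOperator ha hS hg hb.le fun t ht =>
        abs_sub_le_of_increment_mem_Icc (hcond t ht)⟩
  obtain ⟨u, hu⟩ : ∃ u, IsFixedPt (greenOperator a g hS.le hg) u :=
    ⟨_, hT.fixedPoint_isFixedPt⟩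
  refine ⟨IccExtend hS.le u, hfg ▸ isPeriodicSolution_IccExtend_of_isFixedPt ha.ne' hS hg hu,
    fun v hv hv0 => ?_⟩
  have hvsol : IsPeriodicSolution S (fun t r => g t r - a * r) v := hfg ▸ ⟨hv, hv0⟩
  obtain ⟨w, hw, hvw⟩ := exists_isFixedPt_of_isPeriodicSolution ha.ne' hS hg hvsol
  rwa [hT.fixedPoint_unique' hw hu] at hvw

/-- Existence and uniqueness for the first-order periodic BVP
u'(t) = f(t, u(t)), u(0) = u(S), given a lower or an upper solution. -/
theorem periodic_bvp_unique_solution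
    (S a b : ℝ) (hS : 0 < S) (hb : 0 < b) (hba : b < a)
    (f : ℝ → ℝ → ℝ) (hf : Continuous fun p : ℝ × ℝ => f p.1 p.2)
    (hcond : ∀ t ∈ Icc (0 : ℝ) S, ∀ r₁ r₂ : ℝ, r₁ ≤ r₂ →
      0 ≤ (f t r₂ + a * r₂) - (f t r₁ + a * r₁) ∧
        (f t r₂ + a * r₂) - (f t r₁ + a * r₁) ≤ b * (r₂ - r₁))
    (hlowup :
      (∃ α α' : ℝ → ℝ,
        (∀ t ∈ Icc (0 : ℝ) S, HasDerivWithinAt α (α' t) (Icc 0 S) t) ∧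
        (∀ t ∈ Icc (0 : ℝ) S, α' t ≤ f t (α t)) ∧ α 0 ≤ α S) ∨
      (∃ α α' : ℝ → ℝ,
        (∀ t ∈ Icc (0 : ℝ) S, HasDerivWithinAt α (α' t) (Icc 0 S) t) ∧
        (∀ t ∈ Icc (0 : ℝ) S, f t (α t) ≤ α' t) ∧ α S ≤ α 0)) :
    ∃ u : ℝ → ℝ,
      ((∀ t ∈ Icc (0 : ℝ) S, HasDerivWithinAt u (f t (u t)) (Icc 0 S) t) ∧
        u 0 = u S) ∧
      ∀ v : ℝ → ℝ,
        (∀ t ∈ Icc (0 : ℝ) S, HasDerivWithinAt v (f t (v t)) (Icc 0 S) t) →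
        v 0 = v S → Set.EqOn v u (Icc 0 S) :=
  periodic_bvp_unique_solution_general S a b hS hb hba f hf hcond
end

section
/- The periodic BVP integral operator is a κ-contraction on comparable pairs: with (Fu)(t) = ∫₀ˢ G(t, z)[f(z, u(z)) + a·u(z)] dz on C[0,S], if f satisfies 0 ≤ (f(t, r₂) + a·r₂) − (f(t, r₁) + a·r₁) ≤ b(r₂ − r₁) for r₁ ≤ r₂, then F is order-preserving for the pointwise order, and ρ(Fv, Fu, r) ≤ (b/a)·ρ(v, u, r) for all u ⪯ v and all r > 0, where ρ(f, g, r) = sup_{[0,S]}|f − g| / r. -/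
open Set MeasureTheory intervalIntegral Real

/-!
The kernel `G` is nonnegative and `∫₀ˢ G(t, z) dz = 1/a`. Since `F v t - F u t` is the integral
of `G(t, z)` against `(f(z, v z) + a v z) - (f(z, u z) + a u z)`, and the hypothesis on `f` puts
this bracket in `[0, b · sup |v - u|]`, the difference `F v t - F u t` lies in
`[0, (b / a) · sup |v - u|]` for every `t ∈ [0, S]`.
-/

theorem integral_exp_mul_sub {a : ℝ} (ha : a ≠ 0) (c x y : ℝ) :
    ∫ z in x..y, exp (a * (z - c)) = (exp (a * (y - c)) - exp (a * (x - c))) / a := by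
  simp [mul_sub, integral_comp_mul_sub (f := exp) ha, div_eq_inv_mul]

theorem intervalIntegral_mul_mem_Icc {K g : ℝ → ℝ} {x y M : ℝ} (hxy : x ≤ y)
    (hK : IntervalIntegrable K volume x y) (hK₀ : ∀ z ∈ Icc x y, 0 ≤ K z)
    (hg : ContinuousOn g (Icc x y)) (hgM : ∀ z ∈ Icc x y, g z ∈ Icc 0 M) :
    ∫ z in x..y, K z * g z ∈ Icc 0 ((∫ z in x..y, K z) * M) := by
  have hKg : IntervalIntegrable (fun z => K z * g z) volume x y :=
    hK.mul_continuousOn (uIcc_of_le hxy ▸ hg)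
  refine ⟨integral_nonneg hxy fun z hz => mul_nonneg (hK₀ z hz) (hgM z hz).1, ?_⟩
  rw [← intervalIntegral.integral_mul_const]
  exact integral_mono_on hxy hKg (hK.mul_const M) fun z hz =>
    mul_le_mul_of_nonneg_left (hgM z hz).2 (hK₀ z hz)

/-- The Green function of `u' + a u = h` with periodic boundary condition `u 0 = u S`. -/
noncomputable def periodicGreen (S a t z : ℝ) : ℝ :=
  (if z < t then exp (a * (S + z - t)) else exp (a * (z - t))) / (exp (a * S) - 1)

section periodicGreen

variable {S a t z : ℝ}

theorem periodicGreen_of_lt (h : z < t) :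
    periodicGreen S a t z = exp (a * (z - (t - S))) / (exp (a * S) - 1) := by
  rw [periodicGreen, if_pos h]
  ring_nf

theorem periodicGreen_of_le (h : t ≤ z) :
    periodicGreen S a t z = exp (a * (z - t)) / (exp (a * S) - 1) := by
  rw [periodicGreen, if_neg h.not_gt]

theorem periodicGreen_nonneg (haS : 0 ≤ a * S) : 0 ≤ periodicGreen S a t z :=
  div_nonneg (by split_ifs <;> positivity) (sub_nonneg.2 (one_le_exp haS))

theorem intervalIntegrable_periodicGreen_left (ht : 0 ≤ t) :
    IntervalIntegrable (periodicGreen S a t) volume 0 t :=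
  ((by fun_prop : Continuous fun z => exp (a * (z - (t - S))) / (exp (a * S) - 1))
    |>.intervalIntegrable 0 t).congr_uIoo fun z hz =>
      (periodicGreen_of_lt (uIoo_of_le ht ▸ hz).2).symm

theorem intervalIntegrable_periodicGreen_right (ht : t ≤ S) :
    IntervalIntegrable (periodicGreen S a t) volume t S :=
  ((by fun_prop : Continuous fun z => exp (a * (z - t)) / (exp (a * S) - 1))
    |>.intervalIntegrable t S).congr_uIoo fun z hz =>
      (periodicGreen_of_le (uIoo_of_le ht ▸ hz).1.le).symm

theorem intervalIntegrable_periodicGreen (ht : t ∈ Icc 0 S) :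
    IntervalIntegrable (periodicGreen S a t) volume 0 S :=
  (intervalIntegrable_periodicGreen_left ht.1).trans (intervalIntegrable_periodicGreen_right ht.2)

theorem integral_periodicGreen (ha : a ≠ 0) (hS : S ≠ 0) (ht : t ∈ Icc 0 S) :
    ∫ z in (0 : ℝ)..S, periodicGreen S a t z = 1 / a := by
  have hleft : ∫ z in (0 : ℝ)..t, periodicGreen S a t z =
      (exp (a * S) - exp (a * (S - t))) / a / (exp (a * S) - 1) := by
    rw [integral_congr_Ioo_of_le ht.1 fun z hz => periodicGreen_of_lt hz.2,
      intervalIntegral.integral_div, integral_exp_mul_sub ha, sub_sub_cancel, zero_sub, neg_sub]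
  have hright : ∫ z in t..S, periodicGreen S a t z =
      (exp (a * (S - t)) - 1) / a / (exp (a * S) - 1) := by
    rw [integral_congr_Ioo_of_le ht.2 fun z hz => periodicGreen_of_le hz.1.le,
      intervalIntegral.integral_div, integral_exp_mul_sub ha, sub_self, mul_zero, exp_zero]
  have hc : exp (a * S) - 1 ≠ 0 := sub_ne_zero.2 fun h => mul_ne_zero ha hS ((exp_eq_one_iff _).1 h)
  rw [← integral_add_adjacent_intervals (intervalIntegrable_periodicGreen_left ht.1)
    (intervalIntegrable_periodicGreen_right ht.2), hleft, hright]
  field_simp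
  ring

end periodicGreen

/-- The periodic BVP integral operator is order-preserving and a (b/a)-contraction on
comparable pairs, for ρ(f,g,r) = sup_{[0,S]}|f − g| / r. -/
theorem periodic_bvp_operator_contraction
    (S a b : ℝ) (hS : 0 < S) (hb : 0 < b) (hba : b < a)
    (f : ℝ → ℝ → ℝ) (hf : Continuous fun p : ℝ × ℝ => f p.1 p.2)
    (hcond : ∀ t ∈ Icc (0 : ℝ) S, ∀ r₁ r₂ : ℝ, r₁ ≤ r₂ →
      0 ≤ (f t r₂ + a * r₂) - (f t r₁ + a * r₁) ∧
        (f t r₂ + a * r₂) - (f t r₁ + a * r₁) ≤ b * (r₂ - r₁))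
    (F : (ℝ → ℝ) → (ℝ → ℝ))
    (hF : ∀ u : ℝ → ℝ, ∀ t : ℝ, F u t =
      ∫ z in (0 : ℝ)..S,
        ((if z < t then Real.exp (a * (S + z - t)) else Real.exp (a * (z - t))) /
          (Real.exp (a * S) - 1)) * (f z (u z) + a * u z)) :
    ∀ u v : ℝ → ℝ, Continuous u → Continuous v →
      (∀ t ∈ Icc (0 : ℝ) S, u t ≤ v t) →
      (∀ t ∈ Icc (0 : ℝ) S, F u t ≤ F v t) ∧
      (∀ r : ℝ, 0 < r →
        (⨆ t : Icc (0 : ℝ) S, |F v t - F u t|) / r ≤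
          (b / a) * ((⨆ t : Icc (0 : ℝ) S, |v t - u t|) / r)) := by
  intro u v hu hv huv
  have ha : 0 < a := hb.trans hba
  set g : (ℝ → ℝ) → ℝ → ℝ := fun w z => f z (w z) + a * w z
  have hg : ∀ w, Continuous w → Continuous (g w) := fun w hw =>
    (hf.comp (continuous_id.prodMk hw)).add (continuous_const.mul hw)
  set M := ⨆ t : Icc (0 : ℝ) S, |v t - u t|
  have hM : ∀ z ∈ Icc 0 S, v z - u z ≤ M := fun z hz =>
    (le_abs_self _).trans <| le_ciSup (f := fun t : Icc (0 : ℝ) S => |v t - u t|)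
      (isCompact_range (by fun_prop)).bddAbove ⟨z, hz⟩
  have hdiff : ∀ t ∈ Icc 0 S, F v t - F u t ∈ Icc 0 (1 / a * (b * M)) := by
    intro t ht
    have hG := intervalIntegrable_periodicGreen (a := a) ht
    have hF' : ∀ w, F w t = ∫ z in (0 : ℝ)..S, periodicGreen S a t z * g w z := (hF · t)
    rw [hF', hF', ← integral_sub (hG.mul_continuousOn (hg v hv).continuousOn)
      (hG.mul_continuousOn (hg u hu).continuousOn), ← integral_periodicGreen ha.ne' hS.ne' ht]
    simp_rw [← mul_sub]
    refine intervalIntegral_mul_mem_Icc hS.le hG (fun z _ => periodicGreen_nonneg (by positivity))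
      ((hg v hv).sub (hg u hu)).continuousOn fun z hz => ?_
    obtain ⟨hmono, hlip⟩ := hcond z hz (u z) (v z) (huv z hz)
    exact ⟨hmono, hlip.trans (mul_le_mul_of_nonneg_left (hM z hz) hb.le)⟩
  refine ⟨fun t ht => sub_nonneg.1 (hdiff t ht).1, fun r hr => ?_⟩
  have : Nonempty (Icc (0 : ℝ) S) := ⟨⟨0, le_rfl, hS.le⟩⟩
  calc (⨆ t : Icc (0 : ℝ) S, |F v t - F u t|) / r ≤ 1 / a * (b * M) / r := by
        gcongr
        exact ciSup_le fun t => (abs_of_nonneg (hdiff t t.2).1).trans_le (hdiff t t.2).2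
    _ = b / a * (M / r) := by ring
end

section
/- A lower solution is below its image under the periodic integral operator: if α ∈ C¹[0,S] satisfies α'(t) ≤ f(t, α(t)) on [0,S] and α(0) ≤ α(S), then α(t) ≤ (Fα)(t) for all t ∈ [0,S], where (Fα)(t) = ∫₀ˢ G(t, z)[f(z, α(z)) + a·α(z)] dz. -/
/-!
Put `φ(t) = e^{at} α(t)` and `w(z) = e^{az} (f(z, α z) + a α z)`. The differential inequality gives
`φ' ≤ w`, hence `φ v - φ u ≤ ∫ u..v, w` for `0 ≤ u ≤ v ≤ S`. Splitting the kernel at `z = t`,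
`e^{at} (e^{aS} - 1) (Fα)(t) = e^{aS} ∫ 0..t, w + ∫ t..S, w
  ≥ e^{aS} (φ t - φ 0) + (φ S - φ t) = (e^{aS} - 1) φ t + e^{aS} (α S - α 0)`,
and the last term is nonnegative by the boundary condition.
-/

open Set MeasureTheory Real

namespace intervalIntegral

theorem integral_ite_lt_eq_add {E : Type*} [NormedAddCommGroup E] [NormedSpace ℝ E]
    {μ : Measure ℝ} [NullSingletonClass μ] {a b t : ℝ} {g₁ g₂ : ℝ → E} (ht : t ∈ Icc a b)
    (h₁ : IntervalIntegrable g₁ μ a t) (h₂ : IntervalIntegrable g₂ μ t b) :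
    ∫ z in a..b, (if z < t then g₁ z else g₂ z) ∂μ =
      (∫ z in a..t, g₁ z ∂μ) + ∫ z in t..b, g₂ z ∂μ := by
  have e₁ : EqOn g₁ (fun z => if z < t then g₁ z else g₂ z) (uIoo a t) := fun z hz => by
    rw [uIoo_of_le ht.1] at hz
    simp [hz.2]
  have e₂ : EqOn g₂ (fun z => if z < t then g₁ z else g₂ z) (uIoo t b) := fun z hz => by
    rw [uIoo_of_le ht.2] at hz
    simp [not_lt.2 hz.1.le]
  rw [← integral_add_adjacent_intervals (h₁.congr_uIoo e₁) (h₂.congr_uIoo e₂),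
    integral_congr_uIoo e₁, integral_congr_uIoo e₂]

end intervalIntegral

open intervalIntegral

theorem exp_mul_sub_exp_mul_le_integral {a u v : ℝ} {α α' h : ℝ → ℝ} (huv : u ≤ v)
    (hcont : ContinuousOn α (Icc u v)) (hderiv : ∀ t ∈ Ioo u v, HasDerivAt α (α' t) t)
    (hh : ContinuousOn h (Icc u v)) (hle : ∀ t ∈ Ioo u v, α' t + a * α t ≤ h t) :
    exp (a * v) * α v - exp (a * u) * α u ≤ ∫ z in u..v, exp (a * z) * h z := by
  have hexp : Continuous fun z => exp (a * z) := by fun_prop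
  refine sub_le_integral_of_hasDeriv_right_of_le huv (hexp.continuousOn.mul hcont)
    (g' := fun t => exp (a * t) * (α' t + a * α t)) (fun t ht => ?_)
    (hexp.continuousOn.mul hh).integrableOn_Icc
    (fun t ht => mul_le_mul_of_nonneg_left (hle t ht) (exp_pos _).le)
  have hd := ((hasDerivAt_id' t).const_mul a).exp.mul (hderiv t ht)
  exact (hd.congr_deriv (by ring)).hasDerivWithinAt

theorem integral_periodicGreen_mul_eq {a S t : ℝ} {h : ℝ → ℝ} (ht : t ∈ Icc 0 S)
    (hh : ContinuousOn h (Icc 0 S)) :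
    ∫ z in (0 : ℝ)..S, ((if z < t then exp (a * (S + z - t)) else exp (a * (z - t))) /
        (exp (a * S) - 1)) * h z =
      (exp (a * S) * (∫ z in (0 : ℝ)..t, exp (a * z) * h z) + ∫ z in t..S, exp (a * z) * h z) /
        exp (a * t) / (exp (a * S) - 1) := by
  have hw : IntervalIntegrable (fun z => exp (a * z) * h z) volume 0 S := by
    refine ContinuousOn.intervalIntegrable ?_
    rw [uIcc_of_le (ht.1.trans ht.2)]
    exact (Continuous.continuousOn (by fun_prop)).mul hh
  have hw₁ := hw.mono_set (uIcc_subset_uIcc_left (by rwa [uIcc_of_le (ht.1.trans ht.2)]))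
  have hw₂ := hw.mono_set (uIcc_subset_uIcc_right (by rwa [uIcc_of_le (ht.1.trans ht.2)]))
  set C := exp (a * S) - 1
  calc _ = ∫ z in (0 : ℝ)..S, if z < t then exp (a * S) / exp (a * t) / C * (exp (a * z) * h z)
          else 1 / exp (a * t) / C * (exp (a * z) * h z) := by
        congr 1 with z
        split_ifs
        · rw [show a * (S + z - t) = a * S + a * z - a * t by ring, exp_sub, exp_add]
          ring
        · rw [show a * (z - t) = a * z - a * t by ring, exp_sub]
          ring
    _ = exp (a * S) / exp (a * t) / C * (∫ z in (0 : ℝ)..t, exp (a * z) * h z) +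
          1 / exp (a * t) / C * ∫ z in t..S, exp (a * z) * h z := by
        rw [integral_ite_lt_eq_add ht (hw₁.const_mul _) (hw₂.const_mul _),
          intervalIntegral.integral_const_mul, intervalIntegral.integral_const_mul]
    _ = _ := by ring

/-- A lower solution of the periodic BVP lies below its image under the integral
operator. -/
theorem lower_solution_le_integral_operator
    (S a : ℝ) (hS : 0 < S) (ha : 0 < a)
    (f : ℝ → ℝ → ℝ) (hf : Continuous fun p : ℝ × ℝ => f p.1 p.2)
    (α α' : ℝ → ℝ)
    (hderiv : ∀ t ∈ Icc (0 : ℝ) S, HasDerivWithinAt α (α' t) (Icc 0 S) t)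
    (hineq : ∀ t ∈ Icc (0 : ℝ) S, α' t ≤ f t (α t))
    (hbc : α 0 ≤ α S) :
    ∀ t ∈ Icc (0 : ℝ) S,
      α t ≤ ∫ z in (0 : ℝ)..S,
        ((if z < t then Real.exp (a * (S + z - t)) else Real.exp (a * (z - t))) /
          (Real.exp (a * S) - 1)) * (f z (α z) + a * α z) := by
  intro t ht
  have hcont : ContinuousOn α (Icc 0 S) := fun x hx => (hderiv x hx).continuousWithinAt
  have hh : ContinuousOn (fun z => f z (α z) + a * α z) (Icc 0 S) :=
    (hf.comp_continuousOn (continuousOn_id.prodMk hcont)).add (continuousOn_const.mul hcont)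
  have key : ∀ u v, 0 ≤ u → u ≤ v → v ≤ S → exp (a * v) * α v - exp (a * u) * α u ≤
      ∫ z in u..v, exp (a * z) * (f z (α z) + a * α z) := fun u v hu huv hv => by
    have hsub : Icc u v ⊆ Icc 0 S := Icc_subset_Icc hu hv
    have hIoo : Ioo u v ⊆ Ioo 0 S := Ioo_subset_Ioo hu hv
    refine exp_mul_sub_exp_mul_le_integral (α' := α') huv (hcont.mono hsub) (fun x hx => ?_)
      (hh.mono hsub) (fun x hx => by linarith [hineq x (hsub (Ioo_subset_Icc_self hx))])
    exact (hderiv x (hsub (Ioo_subset_Icc_self hx))).hasDerivAt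
      (Icc_mem_nhds (hIoo hx).1 (hIoo hx).2)
  have h₁ := key 0 t le_rfl ht.1 ht.2
  have h₂ := key t S ht.1 ht.2 le_rfl
  rw [mul_zero, exp_zero, one_mul] at h₁
  have hC : 0 < exp (a * S) - 1 := sub_pos.2 (one_lt_exp_iff.2 (mul_pos ha hS))
  rw [integral_periodicGreen_mul_eq ht hh, le_div_iff₀ hC, le_div_iff₀ (exp_pos _)]
  linarith [mul_le_mul_of_nonneg_left h₁ (exp_pos (a * S)).le,
    mul_le_mul_of_nonneg_left hbc (exp_pos (a * S)).le]
end
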